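/- arXiv:2102.11835 — 3 statements merged into one kernel-verified Lean document; each statement's English description precedes it below -/
import Mathlib

section
/- For a bipartite pure state |ψ⟩ on P⊗Q with Schmidt coefficients α₁,...,α_D (so reduced state ψ^P has eigenvalues α_i²), the conditional min-entropy satisfies H_min(P|Q)_ψ = -2 log(α₁ + ... + α_D), i.e., 2^{-H_min(P|Q)_ψ} = (Tr √(ψ^P))². -/
open Matrix
open scoped ComplexOrder Kronecker ComplexConjugate

/-- The conditional min-entropy `H_min(P|Q)_ρ = sup_σ sup {λ : 2^{-λ} I_P ⊗ σ ≥ ρ}`,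
where `σ` ranges over density matrices on `Q`. -/
noncomputable def Hmin {P Q : Type*} [Fintype P] [Fintype Q] [DecidableEq P] [DecidableEq Q]
    (ρ : Matrix (P × Q) (P × Q) ℂ) : ℝ :=
  sSup {l : ℝ | ∃ σ : Matrix Q Q ℂ, σ.PosSemidef ∧ σ.trace = 1 ∧
    ((((2 : ℝ) ^ (-l) : ℝ) : ℂ) • ((1 : Matrix P P ℂ) ⊗ₖ σ) - ρ).PosSemidef}

/-- The rank-one matrix `|ψ⟩⟨ψ|`. -/
def outer {ι : Type*} (ψ : ι → ℂ) : Matrix ι ι ℂ :=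
  Matrix.of fun a b => ψ a * conj (ψ b)

/-!
With `s = ∑ αᵢ`, the density matrix `σ₀ = s⁻¹ ∑ αᵢ |fᵢ⟩⟨fᵢ|` satisfies `s² (1 ⊗ σ₀) ≥ |ψ⟩⟨ψ|`:
since `|eᵢ⟩⟨eᵢ| ≤ 1`, the left side dominates `s ∑ αᵢ |eᵢfᵢ⟩⟨eᵢfᵢ|`, which dominates
`|ψ⟩⟨ψ| = |∑ αᵢ eᵢfᵢ⟩⟨∑ αᵢ eᵢfᵢ|` by the weighted Cauchy–Schwarz inequality. Conversely, if
`c (1 ⊗ σ) ≥ |ψ⟩⟨ψ|`, evaluating both sides at `v = ∑ eᵢ ⊗ fᵢ` gives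
`s² ≤ c ∑ ⟨fᵢ|σ|fᵢ⟩ ≤ c tr σ = c` (Bessel). Hence the optimal `2^{-λ}` is `s²`.
-/

namespace Matrix

variable {R : Type*} {l m n p : Type*}

def kronVec [Mul R] (x : m → R) (y : n → R) : m × n → R := fun q => x q.1 * y q.2

section CommSemiring

variable [CommSemiring R]

theorem kronecker_mulVec_kronVec [Fintype m] [Fintype p] (A : Matrix l m R) (B : Matrix n p R)
    (x : m → R) (y : p → R) : (A ⊗ₖ B) *ᵥ kronVec x y = kronVec (A *ᵥ x) (B *ᵥ y) := by
  ext ⟨i, k⟩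
  simp only [mulVec, dotProduct, kronVec, kronecker_apply, Fintype.sum_prod_type,
    Finset.sum_mul_sum]
  exact Finset.sum_congr rfl fun _ _ => Finset.sum_congr rfl fun _ _ => by ring

theorem kronVec_dotProduct_kronVec [Fintype m] [Fintype n] (x x' : m → R) (y y' : n → R) :
    kronVec x y ⬝ᵥ kronVec x' y' = (x ⬝ᵥ x') * (y ⬝ᵥ y') := by
  simp only [dotProduct, kronVec, Fintype.sum_prod_type, Finset.sum_mul_sum]
  exact Finset.sum_congr rfl fun _ _ => Finset.sum_congr rfl fun _ _ => by ring

theorem star_kronVec [StarRing R] (x : m → R) (y : n → R) :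
    star (kronVec x y) = kronVec (star x) (star y) := by
  ext q
  simp [kronVec]

theorem star_kronVec_dotProduct_kronecker_mulVec [StarRing R] [Fintype m] [Fintype n]
    (A : Matrix m m R) (B : Matrix n n R) (x x' : m → R) (y y' : n → R) :
    star (kronVec x y) ⬝ᵥ (A ⊗ₖ B) *ᵥ kronVec x' y' =
      (star x ⬝ᵥ A *ᵥ x') * (star y ⬝ᵥ B *ᵥ y') := by
  rw [kronecker_mulVec_kronVec, star_kronVec, kronVec_dotProduct_kronVec]

theorem kronecker_sum {ι : Type*} (A : Matrix l m R) (B : ι → Matrix n p R) (s : Finset ι) :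
    A ⊗ₖ ∑ i ∈ s, B i = ∑ i ∈ s, A ⊗ₖ B i := by
  ext ⟨i, k⟩ ⟨j, k'⟩
  simp [sum_apply, Finset.mul_sum]

end CommSemiring

theorem sub_kronecker [Ring R] (A₁ A₂ : Matrix l m R) (B : Matrix n p R) :
    (A₁ - A₂) ⊗ₖ B = A₁ ⊗ₖ B - A₂ ⊗ₖ B := by
  ext ⟨i, k⟩ ⟨j, k'⟩
  simp [sub_mul]

end Matrix

open Matrix

section Outer

variable {ι n : Type*}

theorem outer_eq_vecMulVec (w : n → ℂ) : outer w = vecMulVec w (star w) := rfl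

theorem outer_kronVec {m : Type*} (x : m → ℂ) (y : n → ℂ) :
    outer (kronVec x y) = outer x ⊗ₖ outer y := by
  ext ⟨i, k⟩ ⟨j, k'⟩
  simp only [outer, kronVec, of_apply, kronecker_apply, map_mul]
  ring

variable [Fintype n]

theorem posSemidef_outer (w : n → ℂ) : (outer w).PosSemidef :=
  posSemidef_vecMulVec_self_star w

theorem trace_outer (w : n → ℂ) : (outer w).trace = star w ⬝ᵥ w := by
  rw [outer_eq_vecMulVec, trace_vecMulVec, dotProduct_comm]

theorem star_dotProduct_outer_mulVec (w v : n → ℂ) :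
    star v ⬝ᵥ outer w *ᵥ v = ((‖star w ⬝ᵥ v‖ ^ 2 : ℝ) : ℂ) := by
  rw [outer_eq_vecMulVec, vecMulVec_mulVec, dotProduct_smul, op_smul_eq_mul, star_dotProduct v w,
    RCLike.star_def, Complex.conj_mul', Complex.ofReal_pow]

theorem star_dotProduct_mulVec_eq_trace_mul_outer (σ : Matrix n n ℂ) (w : n → ℂ) :
    star w ⬝ᵥ σ *ᵥ w = (σ * outer w).trace := by
  rw [outer_eq_vecMulVec, mul_vecMulVec, trace_vecMulVec, dotProduct_comm]

def IsOrthonormal [DecidableEq ι] (v : ι → n → ℂ) : Prop :=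
  ∀ i j, star (v i) ⬝ᵥ v j = if i = j then 1 else 0

theorem IsOrthonormal.star_dotProduct [DecidableEq ι] {v : ι → n → ℂ} (hv : IsOrthonormal v)
    (i j : ι) : star (v i) ⬝ᵥ v j = if i = j then 1 else 0 :=
  hv i j

theorem IsOrthonormal.star_dotProduct_self [DecidableEq ι] {v : ι → n → ℂ}
    (hv : IsOrthonormal v) (i : ι) : star (v i) ⬝ᵥ v i = 1 := by
  simpa using hv i i

theorem IsOrthonormal.kronVec {m : Type*} [Fintype m] [DecidableEq ι] {e : ι → m → ℂ}
    {f : ι → n → ℂ} (he : IsOrthonormal e) (hf : IsOrthonormal f) :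
    IsOrthonormal fun i => kronVec (e i) (f i) := by
  intro i j
  rw [star_kronVec, kronVec_dotProduct_kronVec, he, hf]
  split_ifs <;> simp

theorem IsOrthonormal.isStarProjection_sum_outer [Fintype ι] [DecidableEq ι] {v : ι → n → ℂ}
    (hv : IsOrthonormal v) : IsStarProjection (∑ i, outer (v i)) where
  isIdempotentElem := by
    simp only [IsIdempotentElem, Finset.sum_mul_sum, outer_eq_vecMulVec, vecMulVec_mul_vecMulVec,
      hv.star_dotProduct, ite_smul, one_smul, zero_smul, apply_ite (vecMulVec _),
      vecMulVec_zero, Finset.sum_ite_eq, Finset.mem_univ, if_true]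
  isSelfAdjoint := isSelfAdjoint_sum _ fun i _ => (posSemidef_outer (v i)).isHermitian

end Outer

section Loewner

open scoped MatrixOrder

variable {ι n : Type*} [Fintype n]

theorem IsOrthonormal.sum_star_dotProduct_mulVec_le_trace [Fintype ι] [DecidableEq ι]
    {v : ι → n → ℂ} (hv : IsOrthonormal v) {σ : Matrix n n ℂ} (hσ : σ.PosSemidef) :
    ∑ i, star (v i) ⬝ᵥ σ *ᵥ v i ≤ σ.trace := by
  classical
  set P := ∑ i, outer (v i)
  have hP : IsStarProjection (1 - P) := hv.isStarProjection_sum_outer.one_sub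
  have hsum : ∑ i, star (v i) ⬝ᵥ σ *ᵥ v i = (σ * P).trace := by
    simp only [star_dotProduct_mulVec_eq_trace_mul_outer, P, Finset.mul_sum, trace_sum]
  have hconj : (σ * (1 - P)).trace = (star (1 - P) * σ * (1 - P)).trace := by
    rw [hP.isSelfAdjoint.star_eq, Matrix.mul_assoc, trace_mul_comm (1 - P), Matrix.mul_assoc,
      hP.isIdempotentElem.eq]
  have hnonneg : 0 ≤ (σ * (1 - P)).trace :=
    hconj ▸ (star_left_conjugate_nonneg hσ.nonneg _).posSemidef.trace_nonneg
  rw [hsum, ← sub_nonneg]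
  simpa [Matrix.mul_sub, trace_sub] using hnonneg

theorem posSemidef_one_sub_outer [DecidableEq n] {w : n → ℂ} (hw : star w ⬝ᵥ w = 1) :
    (1 - outer w).PosSemidef := by
  have hw' : IsOrthonormal fun _ : Unit => w := fun _ _ => by simpa using hw
  simpa using hw'.isStarProjection_sum_outer.one_sub.nonneg.posSemidef

end Loewner

theorem norm_sum_smul_sq_le {ι E : Type*} [SeminormedAddCommGroup E] [NormedSpace ℝ E]
    (s : Finset ι) {w : ι → ℝ} (hw : ∀ i ∈ s, 0 ≤ w i) (z : ι → E) :
    ‖∑ i ∈ s, w i • z i‖ ^ 2 ≤ (∑ i ∈ s, w i) * ∑ i ∈ s, w i * ‖z i‖ ^ 2 := by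
  have htri : ‖∑ i ∈ s, w i • z i‖ ≤ ∑ i ∈ s, w i * ‖z i‖ := by
    refine (norm_sum_le _ _).trans (Finset.sum_le_sum fun i hi => ?_)
    rw [norm_smul, Real.norm_of_nonneg (hw i hi)]
  calc ‖∑ i ∈ s, w i • z i‖ ^ 2 ≤ (∑ i ∈ s, w i * ‖z i‖) ^ 2 :=
        pow_le_pow_left₀ (norm_nonneg _) htri 2
    _ ≤ (∑ i ∈ s, w i) * ∑ i ∈ s, w i * ‖z i‖ ^ 2 :=
        Finset.sum_sq_le_sum_mul_sum_of_sq_le_mul s hw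
          (fun i hi => mul_nonneg (hw i hi) (sq_nonneg _)) fun i _ => le_of_eq (by ring)

theorem posSemidef_sum_smul_outer_sub_outer_sum {ι n : Type*} [Fintype ι] [Fintype n]
    {w : ι → ℝ} (hw : ∀ i, 0 ≤ w i) (φ : ι → n → ℂ) :
    ((∑ i, w i) • ∑ i, w i • outer (φ i) - outer (∑ i, w i • φ i)).PosSemidef := by
  have hmix : (∑ i, w i • outer (φ i)).PosSemidef :=
    posSemidef_sum _ fun i _ => (posSemidef_outer (φ i)).smul (hw i)
  refine posSemidef_iff_dotProduct_mulVec.mpr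
    ⟨((hmix.smul (Finset.sum_nonneg fun i _ => hw i)).isHermitian.sub
      (posSemidef_outer _).isHermitian), fun v => ?_⟩
  have hqf : star v ⬝ᵥ ((∑ i, w i) • ∑ i, w i • outer (φ i) - outer (∑ i, w i • φ i)) *ᵥ v =
      (((∑ i, w i) * ∑ i, w i * ‖star (φ i) ⬝ᵥ v‖ ^ 2 -
        ‖∑ i, w i • (star (φ i) ⬝ᵥ v)‖ ^ 2 : ℝ) : ℂ) := by
    simp only [sub_mulVec, dotProduct_sub, smul_mulVec, dotProduct_smul, sum_mulVec,
      dotProduct_sum, star_dotProduct_outer_mulVec, star_sum, star_smul, sum_dotProduct,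
      smul_dotProduct]
    push_cast
    simp [Complex.real_smul, Finset.mul_sum]
  rw [hqf, Complex.zero_le_real, sub_nonneg]
  exact norm_sum_smul_sq_le _ (fun i _ => hw i) _

section MinEntropy

variable {P Q : Type*} [Fintype P] [Fintype Q] [DecidableEq P]

/-- `Hmin ρ` is the supremum of the `l` with `IsHminBound ρ (2 ^ (-l))`. -/
def IsHminBound (ρ : Matrix (P × Q) (P × Q) ℂ) (c : ℝ) : Prop :=
  ∃ σ : Matrix Q Q ℂ, σ.PosSemidef ∧ σ.trace = 1 ∧
    ((c : ℂ) • ((1 : Matrix P P ℂ) ⊗ₖ σ) - ρ).PosSemidef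

theorem Hmin_eq_neg_logb [DecidableEq Q] {ρ : Matrix (P × Q) (P × Q) ℂ} {c₀ : ℝ} (hc₀ : 0 < c₀)
    (hbound : IsHminBound ρ c₀) (hle : ∀ c, 0 < c → IsHminBound ρ c → c₀ ≤ c) :
    Hmin ρ = -Real.logb 2 c₀ := by
  refine IsGreatest.csSup_eq ⟨?_, fun l hl => ?_⟩
  · show IsHminBound ρ _
    rwa [neg_neg, Real.rpow_logb two_pos (by norm_num) hc₀]
  · have := hle _ (by positivity) hl
    rw [← Real.logb_le_iff_le_rpow one_lt_two hc₀] at this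
    linarith

variable {ι : Type*} [Fintype ι]

theorem sq_sum_le_of_isHminBound [DecidableEq ι] (α : ι → ℝ) {e : ι → P → ℂ} {f : ι → Q → ℂ}
    (he : IsOrthonormal e) (hf : IsOrthonormal f) {c : ℝ} (hc : 0 ≤ c)
    (h : IsHminBound (outer (∑ i, α i • kronVec (e i) (f i))) c) : (∑ i, α i) ^ 2 ≤ c := by
  obtain ⟨σ, hσ, hσ1, hbound⟩ := h
  set v := ∑ i, kronVec (e i) (f i)
  have hσv : star v ⬝ᵥ ((1 : Matrix P P ℂ) ⊗ₖ σ) *ᵥ v = ∑ i, star (f i) ⬝ᵥ σ *ᵥ f i := by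
    simp [v, star_sum, sum_dotProduct, mulVec_sum, dotProduct_sum,
      star_kronVec_dotProduct_kronecker_mulVec, he.star_dotProduct, ite_mul]
  have hψv : star (∑ i, α i • kronVec (e i) (f i)) ⬝ᵥ v = ∑ i, (α i : ℂ) := by
    simp [v, star_sum, sum_dotProduct, dotProduct_sum, star_smul, smul_dotProduct,
      (he.kronVec hf).star_dotProduct]
  have h0 := hbound.dotProduct_mulVec_nonneg v
  rw [sub_mulVec, dotProduct_sub, smul_mulVec, dotProduct_smul, hσv,
    star_dotProduct_outer_mulVec, hψv, sub_nonneg] at h0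
  have hB := hf.sum_star_dotProduct_mulVec_le_trace hσ
  rw [hσ1] at hB
  have hle : ((‖∑ i, (α i : ℂ)‖ ^ 2 : ℝ) : ℂ) ≤ c :=
    h0.trans (by simpa using mul_le_mul_of_nonneg_left hB (Complex.zero_le_real.mpr hc))
  rwa [Complex.real_le_real, ← Complex.ofReal_sum, Complex.norm_real, Real.norm_eq_abs,
    sq_abs] at hle

theorem isHminBound_sq_sum {α : ι → ℝ} (hα : ∀ i, 0 ≤ α i) (hs : 0 < ∑ i, α i)
    {e : ι → P → ℂ} {f : ι → Q → ℂ} (he : ∀ i, star (e i) ⬝ᵥ e i = 1)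
    (hf : ∀ i, star (f i) ⬝ᵥ f i = 1) :
    IsHminBound (outer (∑ i, α i • kronVec (e i) (f i))) ((∑ i, α i) ^ 2) := by
  set s := ∑ i, α i
  refine ⟨s⁻¹ • ∑ i, α i • outer (f i), ?_, ?_, ?_⟩
  · exact (posSemidef_sum _ fun i _ => (posSemidef_outer (f i)).smul (hα i)).smul
      (inv_nonneg.mpr hs.le)
  · simp only [trace_smul, trace_sum, trace_outer, hf, Complex.real_smul, mul_one,
      Complex.ofReal_inv]
    rw [← Complex.ofReal_sum]
    exact inv_mul_cancel₀ (Complex.ofReal_ne_zero.mpr hs.ne')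
  · have hsplit : ((s ^ 2 : ℝ) : ℂ) • ((1 : Matrix P P ℂ) ⊗ₖ (s⁻¹ • ∑ i, α i • outer (f i))) -
        outer (∑ i, α i • kronVec (e i) (f i)) =
        s • ∑ i, α i • ((1 - outer (e i)) ⊗ₖ outer (f i)) +
          (s • ∑ i, α i • outer (kronVec (e i) (f i)) - outer (∑ i, α i • kronVec (e i) (f i))) := by
      simp only [sub_kronecker, outer_kronVec, kronecker_sum, kronecker_smul, smul_sub,
        Finset.sum_sub_distrib]
      rw [Complex.coe_smul, smul_smul, sq, mul_inv_cancel_right₀ hs.ne', sub_add_sub_cancel]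
    rw [hsplit]
    exact ((posSemidef_sum _ fun i _ => ((posSemidef_one_sub_outer (he i)).kronecker
      (posSemidef_outer (f i))).smul (hα i)).smul hs.le).add
      (posSemidef_sum_smul_outer_sub_outer_sum hα _)

end MinEntropy

/-- For a bipartite pure state `|ψ⟩ = ∑ᵢ αᵢ|eᵢ⟩|fᵢ⟩` with Schmidt coefficients `αᵢ ≥ 0`
(so `∑ᵢ αᵢ² = 1`), the conditional min-entropy is `H_min(P|Q)_ψ = -2 log₂(α₁ + ⋯ + α_D)`. -/
theorem Hmin_pure_state {P Q : Type*} [Fintype P] [Fintype Q] [DecidableEq P] [DecidableEq Q]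
    {D : ℕ} (α : Fin D → ℝ) (e : Fin D → P → ℂ) (f : Fin D → Q → ℂ)
    (hα : ∀ i, 0 ≤ α i) (hα1 : ∑ i, (α i) ^ 2 = 1)
    (he : ∀ i j, ∑ a, conj (e i a) * e j a = if i = j then 1 else 0)
    (hf : ∀ i j, ∑ b, conj (f i b) * f j b = if i = j then 1 else 0)
    (ψ : P × Q → ℂ) (hψ : ∀ x, ψ x = ∑ i, (α i : ℂ) * e i x.1 * f i x.2) :
    Hmin (outer ψ) = -2 * Real.logb 2 (∑ i, α i) := by
  have hψ_eq : ψ = ∑ i, α i • kronVec (e i) (f i) := by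
    ext x
    simp [hψ, kronVec, Finset.sum_apply, Complex.real_smul, mul_assoc]
  have hs : 0 < ∑ i, α i := by
    have hsq : 1 ≤ (∑ i, α i) ^ 2 := hα1 ▸ Finset.sum_sq_le_sq_sum_of_nonneg fun i _ => hα i
    have hnonneg : 0 ≤ ∑ i, α i := Finset.sum_nonneg fun i _ => hα i
    nlinarith
  rw [hψ_eq, Hmin_eq_neg_logb (by positivity)
    (isHminBound_sq_sum hα hs (IsOrthonormal.star_dotProduct_self he)
      (IsOrthonormal.star_dotProduct_self hf))
    fun c hc h => sq_sum_le_of_isHminBound α he hf hc.le h, Real.logb_pow]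
  push_cast
  ring
end

section
/- Let Φ_avg = 2^{-k} ∑_{j=α}^{k+α} Π_{j-α}^R ⊗ Π_j^A / C(n,j), where Π_m^R projects onto the weight-m subspace of k qubits (register R) and Π_j^A onto the weight-j subspace of n qubits (register A). Then averaging U(|φ̂^{(k)}⟩⟨φ̂^{(k)}|^{A₁R} ⊗ |ψ_α⟩⟨ψ_α|^{A₂})U† over the group of block-diagonal unitaries U = ⊕_j U_j (U_j unitary on the weight-j subspace) with respect to Haar measure on each block yields Φ_avg; here |φ̂^{(k)}⟩ = 2^{-k/2}∑_{v∈{0,1}^k}|v⟩|v⟩ is k EPR pairs between A₁ and R, and |ψ_α⟩ has Hamming weight α on the n−k qubits A₂. -/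
open Matrix MeasureTheory
open scoped ComplexOrder Kronecker ComplexConjugate

/-- The Hamming weight of a bit string. -/
def wt {m : ℕ} (v : Fin m → Fin 2) : ℕ := ∑ i, (v i : ℕ)

/-- The total Hamming weight operator on the `n`-qubit space split as
(k qubits) ⊗ (n-k qubits). -/
def hamOpPair (k m : ℕ) :
    Matrix ((Fin k → Fin 2) × (Fin m → Fin 2)) ((Fin k → Fin 2) × (Fin m → Fin 2)) ℂ :=
  Matrix.diagonal fun v => ((wt v.1 + wt v.2 : ℕ) : ℂ)

noncomputable instance {m n : Type*} : MeasurableSpace (Matrix m n ℂ) :=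
  inferInstanceAs (MeasurableSpace (m → n → ℂ))

/-- A charge-conserving (block-diagonal w.r.t. Hamming weight) unitary on `n = k + (n-k)`
qubits: a unitary of the form `⊕_j U_j` with `U_j` unitary on the weight-`j` subspace,
equivalently a unitary commuting with the Hamming weight operator. -/
def IsChargeConservingUnitary (k m : ℕ)
    (U : Matrix ((Fin k → Fin 2) × (Fin m → Fin 2)) ((Fin k → Fin 2) × (Fin m → Fin 2)) ℂ) :
    Prop :=
  U ∈ unitary (Matrix ((Fin k → Fin 2) × (Fin m → Fin 2))
      ((Fin k → Fin 2) × (Fin m → Fin 2)) ℂ) ∧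
    U * hamOpPair k m = hamOpPair k m * U

/-!
Conjugating by a block unitary `V` leaves the twirl `T = E_U[(U ⊗ 1) ρ (U ⊗ 1)ᴴ]` invariant,
since `μ` is left invariant. A sign flip on one basis string forces `T` to vanish off the diagonal
of the `A` index, and the transposition of two strings of equal weight shows that the diagonal
`A`-entries of `T` are constant on each weight block. Each block unitary fixes the block
projectors `Π_j`, so the `R`-operator `Tr_A[(Π_j ⊗ 1) ρ]` is preserved; dividing it by the block
size `C(n, j)` gives the entries of `T`. For the encoded EPR state,
`Tr_A[(Π_j ⊗ 1) ρ] = 2^{-k} Π^R_{j-α}`.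
-/

open Finset

/-- The measurable space on matrices is the product one, hence Borel. -/
instance {m n : Type*} [Countable m] [Countable n] : BorelSpace (Matrix m n ℂ) :=
  inferInstanceAs (BorelSpace (m → n → ℂ))

lemma sum_val_eq_card_filter {ι : Type*} [Fintype ι] (v : ι → Fin 2) :
    ∑ i, (v i : ℕ) = #{i | v i = 1} := by
  rw [card_filter]
  refine sum_congr rfl fun i _ => ?_
  generalize v i = x
  fin_cases x <;> rfl

lemma card_filter_sum_val_eq (ι : Type*) [Fintype ι] [DecidableEq ι] (j : ℕ) :
    #{v : ι → Fin 2 | ∑ i, (v i : ℕ) = j} = (Fintype.card ι).choose j := by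
  rw [← card_univ, ← card_powersetCard]
  refine card_nbij' (fun v => ({i | v i = 1} : Finset ι)) (fun s i => if i ∈ s then 1 else 0)
    (fun v hv => ?_) (fun s hs => ?_) (fun v _ => funext fun i => ?_) (fun s _ => ?_)
  · simp_all [sum_val_eq_card_filter]
  · simp_all [sum_val_eq_card_filter]
  · simp only [mem_filter, mem_univ, true_and]
    generalize v i = x
    fin_cases x <;> rfl
  · ext i
    simp

lemma card_filter_wt_add_wt_eq (k m j : ℕ) :
    #{a : (Fin k → Fin 2) × (Fin m → Fin 2) | wt a.1 + wt a.2 = j} = (k + m).choose j := by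
  have h := card_filter_sum_val_eq (Fin k ⊕ Fin m) j
  rw [Fintype.card_sum, Fintype.card_fin, Fintype.card_fin] at h
  rw [← h]
  refine (card_equiv (Equiv.sumArrowEquivProdArrow _ _ _) fun v => ?_).symm
  rw [mem_filter, mem_filter]
  simp [wt, Fintype.sum_sum_type, Equiv.sumArrowEquivProdArrow, Function.comp_def]

lemma wt_le {m : ℕ} (v : Fin m → Fin 2) : wt v ≤ m :=
  (sum_le_sum fun i _ => Nat.le_of_lt_succ (v i).isLt).trans_eq (by simp)

section Twirl

variable {ι κ : Type*} [Fintype ι] [Fintype κ] [DecidableEq κ]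

lemma kronecker_one_mul_mul_conjTranspose_apply
    (V : Matrix ι ι ℂ) (X : Matrix (ι × κ) (ι × κ) ℂ) (a b : ι) (r s : κ) :
    ((V ⊗ₖ (1 : Matrix κ κ ℂ)) * X * (V ⊗ₖ (1 : Matrix κ κ ℂ))ᴴ) (a, r) (b, s) =
      ∑ c, ∑ e, V a c * X (c, r) (e, s) * star (V b e) := by
  simp only [mul_apply, Fintype.sum_prod_type, kroneckerMap_apply, conjTranspose_apply, one_apply,
    apply_ite star, star_zero, mul_ite, ite_mul, mul_one, mul_zero, zero_mul, sum_ite_eq,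
    mem_univ, if_true, sum_mul]
  rw [sum_comm]

noncomputable def twirl (μ : Measure (Matrix ι ι ℂ)) (ρ : Matrix (ι × κ) (ι × κ) ℂ) :
    Matrix (ι × κ) (ι × κ) ℂ :=
  of fun p q => ∫ U, ((U ⊗ₖ (1 : Matrix κ κ ℂ)) * ρ * (U ⊗ₖ (1 : Matrix κ κ ℂ))ᴴ) p q ∂μ

lemma continuous_kronecker_one_conj_apply (ρ : Matrix (ι × κ) (ι × κ) ℂ) (a b : ι) (r s : κ) :
    Continuous (fun U : Matrix ι ι ℂ =>
      ((U ⊗ₖ (1 : Matrix κ κ ℂ)) * ρ * (U ⊗ₖ (1 : Matrix κ κ ℂ))ᴴ) (a, r) (b, s)) := by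
  simp_rw [kronecker_one_mul_mul_conjTranspose_apply]
  fun_prop

variable [DecidableEq ι] {d : ι → ℂ} {U : Matrix ι ι ℂ}

/-- A unitary that is block diagonal with respect to the level sets of `d`. -/
def IsBlockUnitary (d : ι → ℂ) (U : Matrix ι ι ℂ) : Prop :=
  U ∈ unitary (Matrix ι ι ℂ) ∧ Commute U (diagonal d)

namespace IsBlockUnitary

lemma apply_eq_zero (hU : IsBlockUnitary d U) {a b : ι} (h : d a ≠ d b) : U a b = 0 := by
  have hab : U a b * d b = d a * U a b := by
    simpa only [mul_diagonal, diagonal_mul] using congr_fun₂ hU.2.eq a b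
  have : U a b * (d b - d a) = 0 := by linear_combination hab
  exact (mul_eq_zero.mp this).resolve_right (sub_ne_zero.mpr h.symm)

lemma commute_diagonal_comp (hU : IsBlockUnitary d U) (f : ℂ → ℂ) :
    Commute U (diagonal (f ∘ d)) := by
  refine Matrix.ext fun a b => ?_
  simp only [mul_diagonal, diagonal_mul, Function.comp_apply]
  by_cases h : d a = d b
  · rw [h, mul_comm]
  · simp [hU.apply_eq_zero h]

lemma conjTranspose_mul_diagonal_comp_mul (hU : IsBlockUnitary d U) (f : ℂ → ℂ) :
    Uᴴ * diagonal (f ∘ d) * U = diagonal (f ∘ d) := by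
  rw [mul_assoc, ← (hU.commute_diagonal_comp f).eq, ← mul_assoc, ← star_eq_conjTranspose,
    Unitary.star_mul_self_of_mem hU.1, one_mul]

end IsBlockUnitary

lemma isBlockUnitary_diagonal {e : ι → ℂ} (he : ∀ i, star (e i) * e i = 1) :
    IsBlockUnitary d (diagonal e) := by
  refine ⟨Unitary.mem_iff.mpr ⟨?_, ?_⟩, ?_⟩ <;>
    simp only [star_eq_conjTranspose, diagonal_conjTranspose, Commute, SemiconjBy,
      diagonal_mul_diagonal', Pi.star_apply, he, mul_comm (e _), diagonal_one]

lemma isBlockUnitary_swap {i j : ι} (h : d i = d j) : IsBlockUnitary d (swap ℂ i j) := by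
  refine ⟨Unitary.mem_iff.mpr ⟨?_, ?_⟩, Matrix.ext fun a b => ?_⟩
  · rw [star_eq_conjTranspose, conjTranspose_swap, swap_mul_self]
  · rw [star_eq_conjTranspose, conjTranspose_swap, swap_mul_self]
  · have : d (Equiv.swap i j a) = d a := by
      rw [Equiv.swap_apply_def]
      split_ifs <;> simp_all
    simp only [mul_diagonal, diagonal_mul, swap, PEquiv.toMatrix_toPEquiv_apply, Pi.single_apply]
    split_ifs with hb
    · rw [hb, this, one_mul, mul_one]
    · rw [zero_mul, mul_zero]

lemma isClosed_setOf_isBlockUnitary : IsClosed {U : Matrix ι ι ℂ | IsBlockUnitary d U} :=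
  isClosed_unitary.inter (isClosed_eq (by fun_prop) (by fun_prop))

variable {μ : Measure (Matrix ι ι ℂ)} [IsProbabilityMeasure μ]

lemma ae_isBlockUnitary (hsupp : μ {U | IsBlockUnitary d U} = 1) :
    ∀ᵐ U ∂μ, IsBlockUnitary d U :=
  (ae_iff_measure_eq isClosed_setOf_isBlockUnitary.measurableSet.nullMeasurableSet).mpr
    (by rw [hsupp, measure_univ])

lemma integrable_kronecker_one_conj_apply (hsupp : μ {U | IsBlockUnitary d U} = 1)
    (ρ : Matrix (ι × κ) (ι × κ) ℂ) (a b : ι) (r s : κ) :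
    Integrable (fun U => ((U ⊗ₖ (1 : Matrix κ κ ℂ)) * ρ * (U ⊗ₖ (1 : Matrix κ κ ℂ))ᴴ)
      (a, r) (b, s)) μ := by
  refine .of_bound (continuous_kronecker_one_conj_apply ρ a b r s).aestronglyMeasurable
    (∑ c, ∑ e, ‖ρ (c, r) (e, s)‖) ((ae_isBlockUnitary hsupp).mono fun U hU => ?_)
  have hle : ∀ a b, ‖U a b‖ ≤ 1 := entry_norm_bound_of_unitary hU.1
  rw [kronecker_one_mul_mul_conjTranspose_apply]
  refine (norm_sum_le _ _).trans (sum_le_sum fun c _ => (norm_sum_le _ _).trans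
    (sum_le_sum fun e _ => ?_))
  rw [norm_mul, norm_mul, norm_star]
  calc ‖U a c‖ * ‖ρ (c, r) (e, s)‖ * ‖U b e‖ ≤ 1 * ‖ρ (c, r) (e, s)‖ * 1 := by
        gcongr <;> exact hle _ _
    _ = ‖ρ (c, r) (e, s)‖ := by ring

variable {ρ : Matrix (ι × κ) (ι × κ) ℂ}

lemma kronecker_one_mul_twirl_mul_conjTranspose (hsupp : μ {U | IsBlockUnitary d U} = 1)
    (hinv : ∀ V, IsBlockUnitary d V → μ.map (fun U => V * U) = μ)
    {V : Matrix ι ι ℂ} (hV : IsBlockUnitary d V) :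
    (V ⊗ₖ (1 : Matrix κ κ ℂ)) * twirl μ ρ * (V ⊗ₖ (1 : Matrix κ κ ℂ))ᴴ = twirl μ ρ := by
  ext ⟨a, r⟩ ⟨b, s⟩
  rw [kronecker_one_mul_mul_conjTranspose_apply]
  symm
  have hconj : ∀ U : Matrix ι ι ℂ,
      ((V * U) ⊗ₖ (1 : Matrix κ κ ℂ)) * ρ * ((V * U) ⊗ₖ (1 : Matrix κ κ ℂ))ᴴ =
        (V ⊗ₖ (1 : Matrix κ κ ℂ)) * ((U ⊗ₖ (1 : Matrix κ κ ℂ)) * ρ * (U ⊗ₖ (1 : Matrix κ κ ℂ))ᴴ) *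
          (V ⊗ₖ (1 : Matrix κ κ ℂ))ᴴ := fun U => by
    rw [← one_mul (1 : Matrix κ κ ℂ), mul_kronecker_mul, conjTranspose_mul]
    simp only [mul_assoc, one_mul]
  have hint := integrable_kronecker_one_conj_apply hsupp ρ
  calc twirl μ ρ (a, r) (b, s)
      = ∫ U, (((V * U) ⊗ₖ (1 : Matrix κ κ ℂ)) * ρ * ((V * U) ⊗ₖ (1 : Matrix κ κ ℂ))ᴴ)
          (a, r) (b, s) ∂μ := by
        rw [twirl, of_apply]
        conv_lhs => rw [← hinv V hV]
        exact integral_map (by fun_prop)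
          (continuous_kronecker_one_conj_apply ρ a b r s).aestronglyMeasurable
    _ = ∫ U, ∑ c, ∑ e, V a c * ((U ⊗ₖ (1 : Matrix κ κ ℂ)) * ρ * (U ⊗ₖ (1 : Matrix κ κ ℂ))ᴴ)
          (c, r) (e, s) * star (V b e) ∂μ :=
        integral_congr_ae (.of_forall fun U => by
          dsimp only
          rw [hconj U, kronecker_one_mul_mul_conjTranspose_apply])
    _ = ∑ c, ∑ e, ∫ U, V a c * ((U ⊗ₖ (1 : Matrix κ κ ℂ)) * ρ * (U ⊗ₖ (1 : Matrix κ κ ℂ))ᴴ)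
          (c, r) (e, s) * star (V b e) ∂μ := by
        rw [integral_finsetSum _ fun c _ => integrable_finsetSum _ fun e _ =>
          ((hint c e r s).const_mul _).mul_const _]
        exact sum_congr rfl fun c _ => integral_finsetSum _ fun e _ =>
          ((hint c e r s).const_mul _).mul_const _
    _ = _ := by simp only [integral_mul_const, integral_const_mul, twirl, of_apply]

lemma twirl_apply_of_ne (hsupp : μ {U | IsBlockUnitary d U} = 1)
    (hinv : ∀ V, IsBlockUnitary d V → μ.map (fun U => V * U) = μ)
    {a b : ι} (hab : a ≠ b) (r s : κ) : twirl μ ρ (a, r) (b, s) = 0 := by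
  have hsign : IsBlockUnitary d (diagonal fun c => if c = a then -1 else 1) :=
    isBlockUnitary_diagonal fun c => by split_ifs <;> simp
  have h := congr_fun₂ (kronecker_one_mul_twirl_mul_conjTranspose hsupp hinv hsign (ρ := ρ))
    (a, r) (b, s)
  simp [kronecker_one_mul_mul_conjTranspose_apply, diagonal_apply, hab.symm] at h
  linear_combination -h / 2

lemma twirl_apply_self_eq_of_eq (hsupp : μ {U | IsBlockUnitary d U} = 1)
    (hinv : ∀ V, IsBlockUnitary d V → μ.map (fun U => V * U) = μ)
    {a b : ι} (hab : d a = d b) (r s : κ) :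
    twirl μ ρ (a, r) (a, s) = twirl μ ρ (b, r) (b, s) := by
  simpa [kronecker_one_mul_mul_conjTranspose_apply, swap, Pi.single_apply] using
    (congr_fun₂ (kronecker_one_mul_twirl_mul_conjTranspose hsupp hinv (isBlockUnitary_swap hab)
      (ρ := ρ)) (a, r) (a, s)).symm

lemma IsBlockUnitary.sum_mul_kronecker_one_conj_apply_self (hU : IsBlockUnitary d U)
    (f : ℂ → ℂ) (r s : κ) :
    ∑ a, f (d a) * ((U ⊗ₖ (1 : Matrix κ κ ℂ)) * ρ * (U ⊗ₖ (1 : Matrix κ κ ℂ))ᴴ) (a, r) (a, s) =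
      ∑ a, f (d a) * ρ (a, r) (a, s) := by
  have hproj : ∀ c e, ∑ a, star (U a e) * f (d a) * U a c = if e = c then f (d e) else 0 :=
    fun c e => by
      simpa [mul_apply, diagonal_apply, eq_comm] using
        congr_fun₂ (hU.conjTranspose_mul_diagonal_comp_mul f) e c
  calc ∑ a, f (d a) * ((U ⊗ₖ (1 : Matrix κ κ ℂ)) * ρ * (U ⊗ₖ (1 : Matrix κ κ ℂ))ᴴ) (a, r) (a, s)
      = ∑ c, ∑ e, ρ (c, r) (e, s) * ∑ a, star (U a e) * f (d a) * U a c := by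
        simp only [kronecker_one_mul_mul_conjTranspose_apply, mul_sum]
        rw [sum_comm]
        refine sum_congr rfl fun c _ => ?_
        rw [sum_comm]
        exact sum_congr rfl fun e _ => sum_congr rfl fun a _ => by ring
    _ = ∑ a, f (d a) * ρ (a, r) (a, s) := by
        simp only [hproj, mul_ite, mul_zero, sum_ite_eq', mem_univ, if_true]
        exact sum_congr rfl fun a _ => mul_comm _ _

lemma sum_mul_twirl_apply_self (hsupp : μ {U | IsBlockUnitary d U} = 1) (f : ℂ → ℂ) (r s : κ) :
    ∑ a, f (d a) * twirl μ ρ (a, r) (a, s) = ∑ a, f (d a) * ρ (a, r) (a, s) := by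
  simp only [twirl, of_apply, ← integral_const_mul]
  rw [← integral_finsetSum _ fun a _ =>
    (integrable_kronecker_one_conj_apply hsupp ρ a a r s).const_mul _,
    integral_congr_ae ((ae_isBlockUnitary hsupp).mono fun U hU =>
      hU.sum_mul_kronecker_one_conj_apply_self f r s)]
  simp

theorem twirl_apply (hsupp : μ {U | IsBlockUnitary d U} = 1)
    (hinv : ∀ V, IsBlockUnitary d V → μ.map (fun U => V * U) = μ) (a b : ι) (r s : κ) :
    twirl μ ρ (a, r) (b, s) =
      if a = b then (#{c | d c = d a} : ℂ)⁻¹ * ∑ c with d c = d a, ρ (c, r) (c, s) else 0 := by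
  split_ifs with hab
  · subst hab
    have hblock := sum_mul_twirl_apply_self hsupp (fun z => if z = d a then 1 else 0) r s
      (ρ := ρ)
    simp only [ite_mul, one_mul, zero_mul, ← sum_filter] at hblock
    rw [sum_congr rfl fun c hc => twirl_apply_self_eq_of_eq hsupp hinv (mem_filter.mp hc).2 r s,
      sum_const, nsmul_eq_mul] at hblock
    have hcard : (#{c | d c = d a} : ℂ) ≠ 0 :=
      Nat.cast_ne_zero.mpr (card_ne_zero_of_mem (mem_filter.mpr ⟨mem_univ a, rfl⟩))
    rw [← hblock, inv_mul_cancel_left₀ hcard]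
  · exact twirl_apply_of_ne hsupp hinv hab r s

end Twirl

lemma sum_filter_normSq_of_wt_eq {m α : ℕ} {ψ : (Fin m → Fin 2) → ℂ}
    (hψ : ∀ w, ψ w ≠ 0 → wt w = α) (hnorm : ∑ w, Complex.normSq (ψ w) = 1)
    (P : ℕ → Prop) [DecidablePred P] :
    ∑ w with P (wt w), Complex.normSq (ψ w) = if P α then 1 else 0 := by
  split_ifs with hP
  · rw [sum_filter_of_ne fun w _ hw => hψ w (by simpa using hw) ▸ hP, hnorm]
  · refine sum_eq_zero fun w hw => ?_
    have : ψ w = 0 := by_contra fun h => hP (hψ w h ▸ (mem_filter.mp hw).2)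
    simp [this]

lemma sum_filter_wt_mul_conj_EPR {k m α : ℕ} {ψ : (Fin m → Fin 2) → ℂ}
    (hψ : ∀ w, ψ w ≠ 0 → wt w = α) (hnorm : ∑ w, Complex.normSq (ψ w) = 1)
    {Ψ : ((Fin k → Fin 2) × (Fin m → Fin 2)) × (Fin k → Fin 2) → ℂ}
    (hΨ : ∀ p, Ψ p = ((Real.sqrt (2 ^ k) : ℝ) : ℂ)⁻¹ * (if p.1.1 = p.2 then 1 else 0) * ψ p.1.2)
    (j : ℕ) (r s : Fin k → Fin 2) :
    ∑ c with wt c.1 + wt c.2 = j, Ψ (c, r) * conj (Ψ (c, s)) =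
      if r = s ∧ j = wt r + α then ((2 : ℂ) ^ k)⁻¹ else 0 := by
  have hcoeff : Complex.normSq ((Real.sqrt (2 ^ k) : ℝ) : ℂ)⁻¹ = (2 ^ k)⁻¹ := by
    rw [map_inv₀, Complex.normSq_ofReal, Real.mul_self_sqrt (by positivity)]
  by_cases hrs : r = s
  · subst hrs
    have hterm : ∀ c : (Fin k → Fin 2) × (Fin m → Fin 2), Ψ (c, r) * conj (Ψ (c, r)) =
        if c.1 = r then (((2 : ℝ) ^ k)⁻¹ * Complex.normSq (ψ c.2) : ℝ) else 0 := by
      intro c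
      rw [Complex.mul_conj, hΨ]
      split_ifs <;> simp [hcoeff]
    simp only [hterm, sum_filter, Fintype.sum_prod_type]
    rw [sum_eq_single r (fun x _ hx => by simp [hx]) (by simp)]
    simp only [if_true, ← sum_filter, ← Complex.ofReal_sum, ← mul_sum,
      sum_filter_normSq_of_wt_eq hψ hnorm (fun t => wt r + t = j)]
    by_cases h : wt r + α = j <;> simp [h, eq_comm (a := j)]
  · refine (sum_eq_zero fun c _ => ?_).trans (if_neg fun h => hrs h.1).symm
    by_cases h : c.1 = r <;> simp_all

lemma sum_Icc_inv_choose_mul_ite {n k α w t : ℕ} (ht : t ≤ k) :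
    ∑ j ∈ Icc α (k + α), (n.choose j : ℂ)⁻¹ * (if w = j then 1 else 0) *
      (if t = j - α then 1 else 0) = if w = t + α then (n.choose w : ℂ)⁻¹ else 0 := by
  by_cases hw : w = t + α
  · rw [if_pos hw, sum_eq_single_of_mem w (mem_Icc.mpr (by omega))
      fun j _ hj => by simp [Ne.symm hj]]
    simp [hw]
  · refine (sum_eq_zero fun j hj => ?_).trans (if_neg hw).symm
    have := mem_Icc.mp hj
    split_ifs <;> first | omega | simp

lemma isChargeConservingUnitary_iff_isBlockUnitary {k m : ℕ}
    {U : Matrix ((Fin k → Fin 2) × (Fin m → Fin 2)) ((Fin k → Fin 2) × (Fin m → Fin 2)) ℂ} :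
    IsChargeConservingUnitary k m U ↔ IsBlockUnitary (fun v => ((wt v.1 + wt v.2 : ℕ) : ℂ)) U :=
  Iff.rfl

/-- Averaging `U(|φ̂^{(k)}⟩⟨φ̂^{(k)}|^{A₁R} ⊗ |ψ_α⟩⟨ψ_α|^{A₂})U†` over Haar-random
block-diagonal (charge-conserving) unitaries `U` yields
`Φ_avg = 2^{-k} ∑_{j=α}^{k+α} Π_{j-α}^R ⊗ Π_j^A / C(n,j)`. -/
theorem haar_average_encoded_EPR {n k α : ℕ} (hk : k ≤ n)
    (ψα : (Fin (n - k) → Fin 2) → ℂ)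
    (hψα : ∀ w, ψα w ≠ 0 → wt w = α)
    (hψnorm : ∑ w, Complex.normSq (ψα w) = 1)
    (μ : Measure (Matrix ((Fin k → Fin 2) × (Fin (n - k) → Fin 2))
      ((Fin k → Fin 2) × (Fin (n - k) → Fin 2)) ℂ))
    [IsProbabilityMeasure μ]
    (hsupp : μ {U | IsChargeConservingUnitary k (n - k) U} = 1)
    (hinv : ∀ V, IsChargeConservingUnitary k (n - k) V →
      μ.map (fun U => V * U) = μ)
    -- the input state: `k` EPR pairs between `A₁` and `R`, tensored with `|ψ_α⟩` on `A₂`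
    (Ψ : ((Fin k → Fin 2) × (Fin (n - k) → Fin 2)) × (Fin k → Fin 2) → ℂ)
    (hΨ : ∀ p, Ψ p = ((Real.sqrt (2 ^ k) : ℝ) : ℂ)⁻¹ *
      (if p.1.1 = p.2 then 1 else 0) * ψα p.1.2)
    -- the claimed average state `Φ_avg`
    (Φavg : Matrix (((Fin k → Fin 2) × (Fin (n - k) → Fin 2)) × (Fin k → Fin 2))
      (((Fin k → Fin 2) × (Fin (n - k) → Fin 2)) × (Fin k → Fin 2)) ℂ)
    (hΦ : ∀ p q, Φavg p q = ((2 : ℂ) ^ k)⁻¹ *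
      ∑ j ∈ Finset.Icc α (k + α), ((n.choose j : ℂ))⁻¹ *
        (if p.1 = q.1 ∧ wt p.1.1 + wt p.1.2 = j then 1 else 0) *
        (if p.2 = q.2 ∧ wt p.2 = j - α then 1 else 0)) :
    ∀ p q,
      (∫ U, ((U ⊗ₖ (1 : Matrix (Fin k → Fin 2) (Fin k → Fin 2) ℂ)) * outer Ψ *
        (U ⊗ₖ (1 : Matrix (Fin k → Fin 2) (Fin k → Fin 2) ℂ))ᴴ) p q ∂μ) = Φavg p q := by
  rintro ⟨a, r⟩ ⟨b, s⟩
  have hblock := card_filter_wt_add_wt_eq k (n - k)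
  rw [Nat.add_sub_cancel' hk] at hblock
  simp only [isChargeConservingUnitary_iff_isBlockUnitary] at hsupp hinv
  change twirl μ (outer Ψ) (a, r) (b, s) = _
  rw [twirl_apply hsupp hinv, hΦ]
  simp only [Nat.cast_inj, hblock, outer, of_apply, sum_filter_wt_mul_conj_EPR hψα hψnorm hΨ]
  obtain rfl | hab := eq_or_ne a b
  · obtain rfl | hrs := eq_or_ne r s
    · simp only [true_and, if_true, sum_Icc_inv_choose_mul_ite (wt_le r)]
      split_ifs <;> ring
    · simp [hrs]
  · simp [hab]
end

section
/- For β_i = 2^{-k} ∑_{j=0}^k C(k,j) C(n−t, j+α−i)/C(n, j+α), one has the exact identity β_i = (1/n^{falling t}) ∑_{x,y} 2^{-(x+y)} (−1)^y k^{falling(x+y)} C(i,x) C(t−i, y) α^{falling(i−x)} (n−α−x−y)^{falling(t−i−y)}, where the sum is over nonnegative integers x ≤ i and y ≤ t−i. -/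
/-!
With `A = j + α`, the ratio `C(n-t, A-i) / C(n, A)` equals `A^{(i)} (n-A)^{(t-i)} / n^{(t)}`,
a polynomial in `j`. Chu–Vandermonde expands `(j+α)^{(i)}`, and its reflected form expands
`(n-α-j)^{(t-i)} = ((n-α-x) - (j-x))^{(t-i)}`; together they write the summand in the
falling-factorial basis `j^{(x+y)}`. Averaging against the binomial weights `2^{-k} C(k,j)` then
turns `j^{(m)}` into `2^{-m} k^{(m)}`.
-/

/-- The falling factorial `x(x-1)⋯(x-n+1)` of a real number. -/
def fallingFactorial (x : ℝ) (n : ℕ) : ℝ := ∏ i ∈ Finset.range n, (x - i)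

open Finset Polynomial
open scoped Nat

theorem fallingFactorial_eq_eval (x : ℝ) (n : ℕ) :
    fallingFactorial x n = (descPochhammer ℝ n).eval x :=
  (descPochhammer_eval_eq_prod_range n x).symm

theorem fallingFactorial_eq_smeval (x : ℝ) (n : ℕ) :
    fallingFactorial x n = (descPochhammer ℤ n).smeval x := by
  rw [fallingFactorial_eq_eval, ← descPochhammer_map (Int.castRingHom ℝ), eval_map,
    ← aeval_eq_smeval, aeval_def]
  rfl

theorem fallingFactorial_natCast (m n : ℕ) :
    fallingFactorial m n = m.descFactorial n := by
  rw [fallingFactorial_eq_eval, descPochhammer_eval_eq_descFactorial]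

theorem fallingFactorial_add (x : ℝ) (m n : ℕ) :
    fallingFactorial x (m + n) = fallingFactorial x m * fallingFactorial (x - m) n := by
  simp only [fallingFactorial, prod_range_add, Nat.cast_add, sub_sub]

theorem fallingFactorial_add_eq_sum (a b : ℝ) (s : ℕ) :
    fallingFactorial (a + b) s =
      ∑ x ∈ range (s + 1), (s.choose x : ℝ) * fallingFactorial a x * fallingFactorial b (s - x) := by
  rw [fallingFactorial_eq_smeval, Ring.descPochhammer_smeval_add s (Commute.all a b),
    Nat.sum_antidiagonal_eq_sum_range_succ_mk]
  simp only [fallingFactorial_eq_smeval, mul_assoc]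

theorem fallingFactorial_neg (x : ℝ) (n : ℕ) :
    fallingFactorial (-x) n = (-1) ^ n * fallingFactorial (x + n - 1) n := by
  rw [fallingFactorial_eq_eval, fallingFactorial_eq_eval, descPochhammer_eval_eq_ascPochhammer,
    ← ascPochhammer_eval_neg_eq_descPochhammer]
  ring_nf

theorem fallingFactorial_sub_eq_sum (a b : ℝ) (s : ℕ) :
    fallingFactorial (b - a) s =
      ∑ y ∈ range (s + 1), (s.choose y : ℝ) * (-1) ^ y * fallingFactorial a y *
        fallingFactorial (b - y) (s - y) := by
  have hreflect := fallingFactorial_neg (a - b) s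
  rw [neg_sub, show a - b + s - 1 = a + (s - 1 - b) by ring] at hreflect
  rw [hreflect, fallingFactorial_add_eq_sum, mul_sum]
  refine sum_congr rfl fun y hy => ?_
  have hys : y ≤ s := Nat.lt_succ_iff.mp (mem_range.mp hy)
  rw [show (s : ℝ) - 1 - b = -(b - s + 1) by ring, fallingFactorial_neg,
    show b - s + 1 + ((s - y : ℕ) : ℝ) - 1 = b - y by push_cast [hys]; ring]
  have hsign : (-1 : ℝ) ^ s * (-1) ^ (s - y) = (-1) ^ y := by
    rw [← pow_add, show s + (s - y) = y + 2 * (s - y) by omega, pow_add, pow_mul]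
    norm_num
  linear_combination
    (s.choose y : ℝ) * fallingFactorial a y * fallingFactorial (b - y) (s - y) * hsign

theorem fallingFactorial_add_mul_fallingFactorial_sub (u a c : ℝ) (i m : ℕ) :
    fallingFactorial (u + a) i * fallingFactorial (c - u) m =
      ∑ x ∈ range (i + 1), ∑ y ∈ range (m + 1),
        (i.choose x : ℝ) * (m.choose y : ℝ) * (-1) ^ y * fallingFactorial a (i - x) *
          fallingFactorial (c - x - y) (m - y) * fallingFactorial u (x + y) := by
  rw [fallingFactorial_add_eq_sum, sum_mul]
  refine sum_congr rfl fun x _ => ?_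
  rw [show c - u = (c - x) - (u - x) by ring, fallingFactorial_sub_eq_sum, mul_sum]
  refine sum_congr rfl fun y _ => ?_
  rw [fallingFactorial_add u x y]
  ring

theorem Nat.sum_range_choose_mul_descFactorial (k m : ℕ) :
    ∑ j ∈ range (k + 1), k.choose j * j.descFactorial m = 2 ^ (k - m) * k.descFactorial m := by
  obtain hmk | hkm := le_or_gt m k
  · have hvanish : ∑ j ∈ range m, k.choose j * j.descFactorial m = 0 :=
      sum_eq_zero fun j hj => by rw [Nat.descFactorial_eq_zero_iff_lt.2 (mem_range.mp hj), mul_zero]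
    have hshift : ∀ l ∈ range (k - m + 1),
        k.choose (m + l) * (m + l).descFactorial m = k.descFactorial m * (k - m).choose l := by
      intro l _
      rw [Nat.descFactorial_eq_factorial_mul_choose, Nat.descFactorial_eq_factorial_mul_choose,
        mul_left_comm, Nat.choose_mul (Nat.le_add_right m l), Nat.add_sub_cancel_left]
      ring
    rw [show k + 1 = m + (k - m + 1) by omega, sum_range_add, hvanish, zero_add,
      sum_congr rfl hshift, ← mul_sum, Nat.sum_range_choose, mul_comm]
  · rw [Nat.descFactorial_eq_zero_iff_lt.2 hkm, mul_zero]
    exact sum_eq_zero fun j hj => by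
      rw [Nat.descFactorial_eq_zero_iff_lt.2 (by have := mem_range.mp hj; omega), mul_zero]

theorem inv_two_pow_mul_sum_choose_mul_fallingFactorial (k m : ℕ) :
    ((2 : ℝ) ^ k)⁻¹ * ∑ j ∈ range (k + 1), (k.choose j : ℝ) * fallingFactorial j m =
      ((2 : ℝ) ^ m)⁻¹ * fallingFactorial k m := by
  have hnat := congrArg (Nat.cast (R := ℝ)) (Nat.sum_range_choose_mul_descFactorial k m)
  push_cast at hnat
  simp only [fallingFactorial_natCast, hnat]
  obtain hmk | hkm := le_or_gt m k
  · obtain ⟨d, rfl⟩ := Nat.exists_eq_add_of_le hmk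
    rw [Nat.add_sub_cancel_left, pow_add]
    field_simp
  · simp [Nat.descFactorial_eq_zero_iff_lt.2 hkm]

theorem Nat.cast_descFactorial_eq_div {K : Type*} [Field K] [CharZero K] {a b : ℕ} (h : b ≤ a) :
    (a.descFactorial b : K) = a ! / (a - b)! := by
  rw [eq_div_iff (Nat.cast_ne_zero.2 (Nat.factorial_ne_zero _)),
    ← Nat.factorial_mul_descFactorial h]
  push_cast
  ring

theorem choose_sub_div_choose {n t A i : ℕ} (hiA : i ≤ A) (hit : i ≤ t) (h : A + t ≤ n + i) :
    ((n - t).choose (A - i) : ℝ) / n.choose A =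
      fallingFactorial A i * fallingFactorial ((n : ℝ) - A) (t - i) / fallingFactorial n t := by
  rw [← Nat.cast_sub (by omega), fallingFactorial_natCast, fallingFactorial_natCast,
    fallingFactorial_natCast, Nat.cast_choose ℝ (by omega : A - i ≤ n - t),
    Nat.cast_choose ℝ (by omega : A ≤ n), Nat.cast_descFactorial_eq_div hiA,
    Nat.cast_descFactorial_eq_div (by omega : t - i ≤ n - A),
    Nat.cast_descFactorial_eq_div (by omega : t ≤ n),
    show n - t - (A - i) = n - A - (t - i) by omega]
  field_simp

/-- `β_i = 2^{-k} ∑_{j=0}^k C(k,j) C(n-t, j+α-i)/C(n, j+α)` equals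
`(1/n^{falling t}) ∑_{x,y} 2^{-(x+y)} (-1)^y k^{falling (x+y)} C(i,x) C(t-i,y)
 α^{falling (i-x)} (n-α-x-y)^{falling (t-i-y)}`,
summing over `0 ≤ x ≤ i` and `0 ≤ y ≤ t-i`. -/
theorem beta_falling_factorial_expansion (n t k α i : ℕ)
    (hi : i ≤ t) (htα : t ≤ α) (hn : α + k + t ≤ n) :
    ((2 : ℝ) ^ k)⁻¹ * ∑ j ∈ Finset.range (k + 1),
        (k.choose j : ℝ) * ((n - t).choose (j + α - i) : ℝ) / (n.choose (j + α) : ℝ) =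
      (fallingFactorial (n : ℝ) t)⁻¹ *
        ∑ x ∈ Finset.range (i + 1), ∑ y ∈ Finset.range (t - i + 1),
          ((2 : ℝ) ^ (x + y))⁻¹ * (-1 : ℝ) ^ y * fallingFactorial (k : ℝ) (x + y) *
            (i.choose x : ℝ) * ((t - i).choose y : ℝ) *
            fallingFactorial (α : ℝ) (i - x) *
            fallingFactorial ((n : ℝ) - α - x - y) (t - i - y) := by
  calc _ = ((2 : ℝ) ^ k)⁻¹ * ∑ j ∈ range (k + 1), (k.choose j : ℝ) *
          ((fallingFactorial n t)⁻¹ * ∑ x ∈ range (i + 1), ∑ y ∈ range (t - i + 1),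
            (i.choose x : ℝ) * ((t - i).choose y : ℝ) * (-1) ^ y * fallingFactorial α (i - x) *
              fallingFactorial ((n : ℝ) - α - x - y) (t - i - y) * fallingFactorial j (x + y)) := by
        refine congrArg _ (sum_congr rfl fun j hj => ?_)
        have hj : j ≤ k := Nat.lt_succ_iff.mp (mem_range.mp hj)
        rw [mul_div_assoc, choose_sub_div_choose (by omega) hi (by omega), Nat.cast_add,
          show (n : ℝ) - (j + α) = n - α - j by ring, fallingFactorial_add_mul_fallingFactorial_sub]
        ring
    _ = (fallingFactorial n t)⁻¹ * ∑ x ∈ range (i + 1), ∑ y ∈ range (t - i + 1),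
          (i.choose x : ℝ) * ((t - i).choose y : ℝ) * (-1) ^ y * fallingFactorial α (i - x) *
            fallingFactorial ((n : ℝ) - α - x - y) (t - i - y) *
          (((2 : ℝ) ^ k)⁻¹ * ∑ j ∈ range (k + 1), (k.choose j : ℝ) * fallingFactorial j (x + y)) := by
        simp only [mul_sum]
        rw [sum_comm]
        refine sum_congr rfl fun x _ => ?_
        rw [sum_comm]
        refine sum_congr rfl fun y _ => sum_congr rfl fun j _ => ?_
        ring
    _ = _ := by
        simp only [inv_two_pow_mul_sum_choose_mul_fallingFactorial]
        refine congrArg _ (sum_congr rfl fun x _ => sum_congr rfl fun y _ => ?_)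
        ring
end
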